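/- arXiv:2603.18473 — 10 statements merged into one kernel-verified Lean document; each statement's English description precedes it below -/
import Mathlib

section
/- Let n ≥ 1, fix w ∈ ℝⁿ, and let B, C, V be real numbers with 0 ≤ B ≤ 1, C ≥ 0, V ≥ 0. For any d ∈ ℝⁿ with ⟨d, w⟩ ≥ 0, the following are equivalent: (i) d = 0, or d ≠ 0 and ‖d‖ ≤ V·(1 + C·(⟨d, w⟩/‖d‖)^B); (ii) there exist real numbers γ₁, γ₂, γ₃ ≥ 0 such that ‖d‖ ≤ γ₁, γ₁ ≤ (γ₂ + γ₃)^{1/(1+B)}, γ₂ ≤ V·γ₁^B, and γ₃ ≤ C·V·⟨d, w⟩^B. -/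
/-!
With `K = C V ⟪d, w⟫ ^ B`, clearing the denominator `‖d‖ ^ B` turns (i) into the power-cone
inequality `‖d‖ ^ (1 + B) ≤ V ‖d‖ ^ B + K`, and the variables `γ₂, γ₃` of (ii) only split its
right-hand side. Dividing by `γ ^ B`, the inequality `γ ^ (1 + B) ≤ V γ ^ B + K` reads
`γ ≤ V + K / γ ^ B`, whose left side increases and right side decreases in `γ > 0`; so it passes
from the relaxation variable `γ₁` down to any `0 < ‖d‖ ≤ γ₁`.
-/

open Real
open scoped RealInnerProductSpace

section PowerCone

variable {B V K : ℝ}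

theorem le_add_div_rpow_iff_rpow_one_add_le {a : ℝ} (ha : 0 < a) :
    a ≤ V + K / a ^ B ↔ a ^ (1 + B) ≤ V * a ^ B + K := by
  have haB : 0 < a ^ B := rpow_pos_of_pos ha B
  rw [rpow_add ha, rpow_one, ← mul_le_mul_iff_of_pos_right haB, add_mul,
    div_mul_cancel₀ _ haB.ne']

theorem rpow_one_add_le_of_le_of_rpow_one_add_le (hB : 0 ≤ B) (hK : 0 ≤ K) {a γ : ℝ}
    (ha : 0 < a) (haγ : a ≤ γ) (hγ : γ ^ (1 + B) ≤ V * γ ^ B + K) :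
    a ^ (1 + B) ≤ V * a ^ B + K := by
  have hγpos : 0 < γ := ha.trans_le haγ
  rw [← le_add_div_rpow_iff_rpow_one_add_le ha]
  rw [← le_add_div_rpow_iff_rpow_one_add_le hγpos] at hγ
  calc a ≤ γ := haγ
    _ ≤ V + K / γ ^ B := hγ
    _ ≤ V + K / a ^ B := by
      gcongr

theorem le_add_div_rpow_iff_exists_rpow_one_add_le (hB : 0 ≤ B) (hK : 0 ≤ K) {a : ℝ}
    (ha : 0 < a) :
    a ≤ V + K / a ^ B ↔ ∃ γ, 0 ≤ γ ∧ a ≤ γ ∧ γ ^ (1 + B) ≤ V * γ ^ B + K := by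
  rw [le_add_div_rpow_iff_rpow_one_add_le ha]
  refine ⟨fun h ↦ ⟨a, ha.le, le_rfl, h⟩, ?_⟩
  rintro ⟨γ, -, haγ, hγ⟩
  exact rpow_one_add_le_of_le_of_rpow_one_add_le hB hK ha haγ hγ

theorem exists_rpow_one_add_le_of_nonpos (hB : 0 ≤ B) (hV : 0 ≤ V) (hK : 0 ≤ K) {a : ℝ}
    (ha : a ≤ 0) : ∃ γ, 0 ≤ γ ∧ a ≤ γ ∧ γ ^ (1 + B) ≤ V * γ ^ B + K := by
  refine ⟨0, le_rfl, ha, ?_⟩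
  rw [zero_rpow (by positivity)]
  have := rpow_nonneg le_rfl B
  positivity

theorem exists_conic_lift_iff (hB : 0 ≤ B) (hV : 0 ≤ V) (hK : 0 ≤ K) (a : ℝ) :
    (∃ γ₁ γ₂ γ₃ : ℝ, 0 ≤ γ₁ ∧ 0 ≤ γ₂ ∧ 0 ≤ γ₃ ∧ a ≤ γ₁ ∧ γ₁ ≤ (γ₂ + γ₃) ^ (1 / (1 + B)) ∧
        γ₂ ≤ V * γ₁ ^ B ∧ γ₃ ≤ K) ↔
      ∃ γ, 0 ≤ γ ∧ a ≤ γ ∧ γ ^ (1 + B) ≤ V * γ ^ B + K := by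
  have h1B : 0 < 1 + B := by linarith
  constructor
  · rintro ⟨γ₁, γ₂, γ₃, hγ₁, hγ₂, hγ₃, haγ, hroot, h₂, h₃⟩
    rw [one_div, le_rpow_inv_iff_of_pos hγ₁ (by positivity) h1B] at hroot
    exact ⟨γ₁, hγ₁, haγ, by linarith⟩
  · rintro ⟨γ, hγ, haγ, hpow⟩
    have hγB : 0 ≤ V * γ ^ B := mul_nonneg hV (rpow_nonneg hγ B)
    refine ⟨γ, V * γ ^ B, K, hγ, hγB, hK, haγ, ?_, le_rfl, le_rfl⟩
    rwa [one_div, le_rpow_inv_iff_of_pos hγ (by positivity) h1B]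

end PowerCone

theorem rothermel_conic_representation_general (n : ℕ)
    (w : EuclideanSpace ℝ (Fin n)) (B C V : ℝ)
    (hB0 : 0 ≤ B) (hC : 0 ≤ C) (hV : 0 ≤ V)
    (d : EuclideanSpace ℝ (Fin n)) (hdw : 0 ≤ ⟪d, w⟫) :
    (d = 0 ∨ (d ≠ 0 ∧ ‖d‖ ≤ V * (1 + C * (⟪d, w⟫ / ‖d‖) ^ B))) ↔
      (∃ γ₁ γ₂ γ₃ : ℝ, 0 ≤ γ₁ ∧ 0 ≤ γ₂ ∧ 0 ≤ γ₃ ∧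
        ‖d‖ ≤ γ₁ ∧ γ₁ ≤ (γ₂ + γ₃) ^ (1 / (1 + B)) ∧
        γ₂ ≤ V * γ₁ ^ B ∧ γ₃ ≤ C * V * ⟪d, w⟫ ^ B) := by
  have hK : 0 ≤ C * V * ⟪d, w⟫ ^ B := by have := rpow_nonneg hdw B; positivity
  rw [exists_conic_lift_iff hB0 hV hK]
  rcases eq_or_ne d 0 with rfl | hd
  · simpa using exists_rpow_one_add_le_of_nonpos hB0 hV hK le_rfl
  have hdpos : 0 < ‖d‖ := norm_pos_iff.mpr hd
  have hclear : V * (1 + C * (⟪d, w⟫ / ‖d‖) ^ B) = V + C * V * ⟪d, w⟫ ^ B / ‖d‖ ^ B := by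
    rw [div_rpow hdw hdpos.le]; ring
  rw [hclear, ← le_add_div_rpow_iff_exists_rpow_one_add_le hB0 hK hdpos]
  simp [hd]

/-- Power-conic representation of the Rothermel-inspired spread set (Proposition 3.1). -/
theorem rothermel_conic_representation (n : ℕ) (hn : 1 ≤ n)
    (w : EuclideanSpace ℝ (Fin n)) (B C V : ℝ)
    (hB0 : 0 ≤ B) (hB1 : B ≤ 1) (hC : 0 ≤ C) (hV : 0 ≤ V)
    (d : EuclideanSpace ℝ (Fin n)) (hdw : 0 ≤ ⟪d, w⟫) :
    (d = 0 ∨ (d ≠ 0 ∧ ‖d‖ ≤ V * (1 + C * (⟪d, w⟫ / ‖d‖) ^ B))) ↔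
      (∃ γ₁ γ₂ γ₃ : ℝ, 0 ≤ γ₁ ∧ 0 ≤ γ₂ ∧ 0 ≤ γ₃ ∧
        ‖d‖ ≤ γ₁ ∧ γ₁ ≤ (γ₂ + γ₃) ^ (1 / (1 + B)) ∧
        γ₂ ≤ V * γ₁ ^ B ∧ γ₃ ≤ C * V * ⟪d, w⟫ ^ B) :=
  rothermel_conic_representation_general n w B C V hB0 hC hV d hdw
end

section
/- Let n ≥ 2, R̄ ≥ 0, ε ≥ 0. Then the convex hull of the set Z^IP_n := {(d, w, z) ∈ ℝⁿ × ℝⁿ × ℝ : z ≤ ⟨d, w⟩, ‖d‖ ≤ R̄, ‖w‖ ≤ ε} equals the set Z^CH_n := {(d, w, z) : there exist real n×n matrices D, W, Z such that the 2n×2n block matrix [[D, Zᵀ],[Z, W]] − u·uᵀ is positive semidefinite, where u ∈ ℝ^{2n} is the concatenation of d and w, and tr(Z) ≥ z, tr(D) ≤ R̄², tr(W) ≤ ε²}. -/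
/-!
The Shor set is convex and contains `Z^IP` (take `D = d dᵀ`, `W = w wᵀ`, `Z = w dᵀ`), so it
contains the convex hull. Conversely, summing the principal `2 × 2` submatrices on the index
pairs `(inl i, inr i)` compresses the semidefinite constraint to the `2 × 2` matrix of block
traces, whose determinant gives `z ≤ ⟪d, w⟫ + a b` with `a = √(R² - ‖d‖²)`, `b = √(ε² - ‖w‖²)`.
Such a point is a convex combination of two points of `Z^IP` with the same `z`: move `d` and `w`
by `c a e` and `c b e` along a unit vector `e ⊥ b d - a w` (which exists as `n ≥ 2`); then
`⟪d, e⟫ : ⟪w, e⟫ = a : b`, so one value of `c` of each sign puts both vectors on their spheres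
and raises `⟪d, w⟫` by exactly `a b`.
-/

open scoped RealInnerProductSpace Matrix

open Matrix Module

section Geometry

variable {E : Type*} [NormedAddCommGroup E] [InnerProductSpace ℝ E]

theorem exists_norm_eq_one_inner_eq_zero (hE : 1 < finrank ℝ E) (v : E) :
    ∃ e : E, ‖e‖ = 1 ∧ ⟪v, e⟫ = 0 := by
  have : FiniteDimensional ℝ E := Module.finite_of_finrank_pos (by omega)
  obtain ⟨x, hx, hx0⟩ := Submodule.exists_mem_ne_zero_of_ne_bot
    (LinearMap.ker_ne_bot_of_finrank_lt (f := innerₛₗ ℝ v) (by simpa using hE))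
  refine ⟨(‖x‖⁻¹ : ℝ) • x, norm_smul_inv_norm hx0, ?_⟩
  rw [real_inner_smul_right, show ⟪v, x⟫ = 0 from hx, mul_zero]

theorem exists_pos_sq_add_two_mul_eq_one (t : ℝ) : ∃ c : ℝ, 0 < c ∧ c ^ 2 + 2 * t * c = 1 := by
  have hs : √(t ^ 2 + 1) ^ 2 = t ^ 2 + 1 := Real.sq_sqrt (by positivity)
  have hs0 := Real.sqrt_nonneg (t ^ 2 + 1)
  exact ⟨√(t ^ 2 + 1) - t, by nlinarith, by linear_combination hs⟩

theorem mem_segment_add_smul_sub_smul {F : Type*} [AddCommGroup F] [Module ℝ F] (x v : F)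
    {c₁ c₂ : ℝ} (h₁ : 0 ≤ c₁) (h₂ : 0 ≤ c₂) : x ∈ segment ℝ (x + c₁ • v) (x - c₂ • v) := by
  rw [mem_segment_iff_sameRay, sub_add_cancel_left, sub_sub_cancel_left, sameRay_neg_iff]
  exact (SameRay.sameRay_nonneg_smul_left v h₁).nonneg_smul_right h₂

variable (E) in
def ipHypograph (R ε : ℝ) : Set (E × E × ℝ) :=
  {p | p.2.2 ≤ ⟪p.1, p.2.1⟫ ∧ ‖p.1‖ ≤ R ∧ ‖p.2.1‖ ≤ ε}

variable (E) in
def ipEnvelope (R ε : ℝ) : Set (E × E × ℝ) :=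
  {p | ‖p.1‖ ≤ R ∧ ‖p.2.1‖ ≤ ε ∧
    p.2.2 ≤ ⟪p.1, p.2.1⟫ + √(R ^ 2 - ‖p.1‖ ^ 2) * √(ε ^ 2 - ‖p.2.1‖ ^ 2)}

theorem norm_add_smul_sq {d e : E} {a t c : ℝ} (he : ‖e‖ = 1) (hde : ⟪d, e⟫ = a * t)
    (hc : c ^ 2 + 2 * t * c = 1) : ‖d + (c * a) • e‖ ^ 2 = ‖d‖ ^ 2 + a ^ 2 := by
  rw [norm_add_sq_real, real_inner_smul_right, hde, norm_smul, mul_pow, he, Real.norm_eq_abs,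
    sq_abs]
  linear_combination a ^ 2 * hc

theorem inner_add_smul_add_smul {d w e : E} {a b t c : ℝ} (he : ‖e‖ = 1)
    (hde : ⟪d, e⟫ = a * t) (hwe : ⟪w, e⟫ = b * t) (hc : c ^ 2 + 2 * t * c = 1) :
    ⟪d + (c * a) • e, w + (c * b) • e⟫ = ⟪d, w⟫ + a * b := by
  simp only [inner_add_left, inner_add_right, real_inner_smul_left, real_inner_smul_right,
    real_inner_self_eq_norm_sq, he]
  rw [real_inner_comm w e, hde, hwe]
  linear_combination a * b * hc

theorem add_smul_mem_ipHypograph {d w e : E} {z R ε a b t c : ℝ} (hR : 0 ≤ R) (hε : 0 ≤ ε)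
    (he : ‖e‖ = 1) (hde : ⟪d, e⟫ = a * t) (hwe : ⟪w, e⟫ = b * t) (hc : c ^ 2 + 2 * t * c = 1)
    (hdR : ‖d‖ ^ 2 + a ^ 2 = R ^ 2) (hwε : ‖w‖ ^ 2 + b ^ 2 = ε ^ 2) (hz : z ≤ ⟪d, w⟫ + a * b) :
    (d, w, z) + c • (a • e, b • e, (0 : ℝ)) ∈ ipHypograph E R ε := by
  simp only [Prod.smul_mk, Prod.mk_add_mk, smul_zero, add_zero, smul_smul]
  refine ⟨(inner_add_smul_add_smul he hde hwe hc).symm ▸ hz, ?_, ?_⟩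
  · rw [← (pow_left_inj₀ (norm_nonneg _) hR two_ne_zero).1 (norm_add_smul_sq he hde hc ▸ hdR)]
  · rw [← (pow_left_inj₀ (norm_nonneg _) hε two_ne_zero).1 (norm_add_smul_sq he hwe hc ▸ hwε)]

theorem ipEnvelope_subset_convexHull (hE : 1 < finrank ℝ E) (R ε : ℝ) :
    ipEnvelope E R ε ⊆ convexHull ℝ (ipHypograph E R ε) := by
  rintro ⟨d, w, z⟩ ⟨hd, hw, hz⟩
  set a := √(R ^ 2 - ‖d‖ ^ 2)
  set b := √(ε ^ 2 - ‖w‖ ^ 2)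
  have hR : 0 ≤ R := (norm_nonneg d).trans hd
  have hε : 0 ≤ ε := (norm_nonneg w).trans hw
  have hdR : ‖d‖ ^ 2 + a ^ 2 = R ^ 2 := by
    rw [Real.sq_sqrt (sub_nonneg.2 (pow_le_pow_left₀ (norm_nonneg _) hd 2))]; ring
  have hwε : ‖w‖ ^ 2 + b ^ 2 = ε ^ 2 := by
    rw [Real.sq_sqrt (sub_nonneg.2 (pow_le_pow_left₀ (norm_nonneg _) hw 2))]; ring
  rcases (mul_nonneg (Real.sqrt_nonneg _) (Real.sqrt_nonneg _) : 0 ≤ a * b).eq_or_lt with hab | hab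
  · exact subset_convexHull ℝ _ ⟨by simpa [← hab] using hz, hd, hw⟩
  have ha : a ≠ 0 := left_ne_zero_of_mul hab.ne'
  obtain ⟨e, he, hperp⟩ := exists_norm_eq_one_inner_eq_zero hE (b • d - a • w)
  obtain ⟨t, hde⟩ : ∃ t, ⟪d, e⟫ = a * t := ⟨⟪d, e⟫ / a, by field_simp⟩
  have hwe : ⟪w, e⟫ = b * t := by
    rw [inner_sub_left, real_inner_smul_left, real_inner_smul_left] at hperp
    exact mul_left_cancel₀ ha (by linear_combination -hperp + b * hde)
  obtain ⟨c₁, hc₁, hc₁t⟩ := exists_pos_sq_add_two_mul_eq_one t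
  obtain ⟨c₂, hc₂, hc₂t⟩ := exists_pos_sq_add_two_mul_eq_one (-t)
  have h₁ := add_smul_mem_ipHypograph hR hε he hde hwe hc₁t hdR hwε hz
  have h₂ := add_smul_mem_ipHypograph (e := -e) hR hε (by rwa [norm_neg])
    (by rw [inner_neg_right, hde, mul_neg]) (by rw [inner_neg_right, hwe, mul_neg]) hc₂t hdR hwε hz
  rw [show ((a • -e, b • -e, 0) : E × E × ℝ) = -(a • e, b • e, 0) by simp, smul_neg,
    ← sub_eq_add_neg] at h₂
  exact segment_subset_convexHull h₁ h₂ (mem_segment_add_smul_sub_smul _ _ hc₁.le hc₂.le)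

end Geometry

theorem Matrix.vecMulVec_sumElim {l m n o α : Type*} [Mul α] (a : l → α) (b : m → α)
    (c : n → α) (d : o → α) :
    vecMulVec (Sum.elim a b) (Sum.elim c d) =
      fromBlocks (vecMulVec a c) (vecMulVec a d) (vecMulVec b c) (vecMulVec b d) := by
  ext (i | i) (j | j) <;> rfl

theorem Matrix.fromBlocks_sub_fromBlocks {l m n o α : Type*} [Sub α] (A : Matrix n l α)
    (B : Matrix n m α) (C : Matrix o l α) (D : Matrix o m α) (A' : Matrix n l α)
    (B' : Matrix n m α) (C' : Matrix o l α) (D' : Matrix o m α) :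
    fromBlocks A B C D - fromBlocks A' B' C' D' =
      fromBlocks (A - A') (B - B') (C - C') (D - D') := by
  ext (i | i) (j | j) <;> rfl

theorem Matrix.PosSemidef.traces_of_fromBlocks {ι R : Type*} [Fintype ι] [CommRing R]
    [PartialOrder R] [StarRing R] [AddLeftMono R] {A B C D : Matrix ι ι R}
    (h : (fromBlocks A B C D).PosSemidef) : !![A.trace, B.trace; C.trace, D.trace].PosSemidef := by
  have : !![A.trace, B.trace; C.trace, D.trace] =
      ∑ i, (fromBlocks A B C D).submatrix ![.inl i, .inr i] ![.inl i, .inr i] := by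
    ext k l
    rw [Matrix.sum_apply]
    fin_cases k <;> fin_cases l <;> simp [trace]
  rw [this]
  exact posSemidef_sum _ fun i _ => h.submatrix _

theorem sq_le_mul_of_posSemidef_fin_two {a b c d : ℝ} (h : !![a, b; c, d].PosSemidef) :
    c ^ 2 ≤ a * d := by
  have hdet := h.det_nonneg
  have hbc : b = c := by simpa using h.isHermitian.apply 1 0
  rw [det_fin_two_of, hbc, ← sq] at hdet
  linarith

theorem convex_setOf_posSemidef_sub_vecMulVec_self {m : Type*} [Fintype m] :
    Convex ℝ {q : Matrix m m ℝ × (m → ℝ) | (q.1 - vecMulVec q.2 q.2).PosSemidef} := by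
  rintro ⟨X, u⟩ hu ⟨Y, v⟩ hv α β hα hβ hαβ
  have key : α • X + β • Y - vecMulVec (α • u + β • v) (α • u + β • v) =
      α • (X - vecMulVec u u) + β • (Y - vecMulVec v v) + (α * β) • vecMulVec (u - v) (u - v) := by
    ext i j
    simp only [vecMulVec_apply, Pi.add_apply, Pi.smul_apply, Pi.sub_apply, Matrix.sub_apply,
      Matrix.add_apply, Matrix.smul_apply, smul_eq_mul]
    linear_combination -(α * (u i * u j) + β * (v i * v j)) * hαβ
  have huv : (vecMulVec (u - v) (u - v)).PosSemidef := by
    simpa using posSemidef_vecMulVec_self_star (u - v)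
  simp only [Set.mem_ofPred_eq, Prod.fst_add, Prod.snd_add, Prod.smul_fst, Prod.smul_snd, key]
  exact ((hu.smul hα).add (hv.smul hβ)).add (huv.smul (mul_nonneg hα hβ))

theorem EuclideanSpace.dotProduct_ofLp {ι : Type*} [Fintype ι] (x y : EuclideanSpace ℝ ι) :
    WithLp.ofLp x ⬝ᵥ WithLp.ofLp y = ⟪x, y⟫ := by
  simp [EuclideanSpace.inner_eq_star_dotProduct, dotProduct_comm]

section Shor

variable {ι : Type*} [Fintype ι]

variable (ι) in
def shorRelaxation (R ε : ℝ) :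
    Set (EuclideanSpace ℝ ι × EuclideanSpace ℝ ι × ℝ) :=
  {p | ∃ D W Z : Matrix ι ι ℝ,
    (Matrix.fromBlocks D Zᵀ Z W -
      Matrix.vecMulVec (Sum.elim (fun i => p.1 i) (fun i => p.2.1 i))
        (Sum.elim (fun i => p.1 i) (fun i => p.2.1 i))).PosSemidef ∧
    p.2.2 ≤ Z.trace ∧ D.trace ≤ R ^ 2 ∧ W.trace ≤ ε ^ 2}

theorem ipHypograph_subset_shorRelaxation (R ε : ℝ) :
    ipHypograph (EuclideanSpace ℝ ι) R ε ⊆ shorRelaxation ι R ε := by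
  rintro ⟨d, w, z⟩ ⟨hz, hd, hw⟩
  refine ⟨vecMulVec (WithLp.ofLp d) (WithLp.ofLp d), vecMulVec (WithLp.ofLp w) (WithLp.ofLp w),
    vecMulVec (WithLp.ofLp w) (WithLp.ofLp d), ?_, ?_, ?_, ?_⟩
  · rw [transpose_vecMulVec, vecMulVec_sumElim, sub_self]
    exact .zero
  · rwa [trace_vecMulVec, EuclideanSpace.dotProduct_ofLp, real_inner_comm]
  · rw [trace_vecMulVec, EuclideanSpace.dotProduct_ofLp, real_inner_self_eq_norm_sq]
    exact pow_le_pow_left₀ (norm_nonneg _) hd 2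
  · rw [trace_vecMulVec, EuclideanSpace.dotProduct_ofLp, real_inner_self_eq_norm_sq]
    exact pow_le_pow_left₀ (norm_nonneg _) hw 2

theorem convex_shorRelaxation (R ε : ℝ) : Convex ℝ (shorRelaxation ι R ε) := by
  rintro p ⟨D₁, W₁, Z₁, h₁, hz₁, hD₁, hW₁⟩ q ⟨D₂, W₂, Z₂, h₂, hz₂, hD₂, hW₂⟩ α β hα hβ hαβ
  refine ⟨α • D₁ + β • D₂, α • W₁ + β • W₂, α • Z₁ + β • Z₂, ?_, ?_, ?_, ?_⟩
  · have h := convex_setOf_posSemidef_sub_vecMulVec_self (x := (fromBlocks D₁ Z₁ᵀ Z₁ W₁, _))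
      (y := (fromBlocks D₂ Z₂ᵀ Z₂ W₂, _)) h₁ h₂ hα hβ hαβ
    simp only [Set.mem_ofPred_eq, Prod.fst_add, Prod.smul_fst, Prod.snd_add, Prod.smul_snd] at h
    convert h using 3
    · ext (i | i) (j | j) <;> simp
    all_goals ext (i | i) <;> simp
  · simpa [trace_add, trace_smul] using
      add_le_add (mul_le_mul_of_nonneg_left hz₁ hα) (mul_le_mul_of_nonneg_left hz₂ hβ)
  · simpa [trace_add, trace_smul] using convex_Iic (R ^ 2) hD₁ hD₂ hα hβ hαβ
  · simpa [trace_add, trace_smul] using convex_Iic (ε ^ 2) hW₁ hW₂ hα hβ hαβ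

theorem shorRelaxation_subset_ipEnvelope {R ε : ℝ} (hR : 0 ≤ R) (hε : 0 ≤ ε) :
    shorRelaxation ι R ε ⊆ ipEnvelope (EuclideanSpace ℝ ι) R ε := by
  rintro ⟨d, w, z⟩ ⟨D, W, Z, hM, hz, hD, hW⟩
  rw [vecMulVec_sumElim, fromBlocks_sub_fromBlocks] at hM
  have hT := hM.traces_of_fromBlocks
  have hdD : ‖d‖ ^ 2 ≤ D.trace := by
    simpa [trace_sub, trace_vecMulVec, EuclideanSpace.dotProduct_ofLp] using hT.diag_nonneg (i := 0)
  have hwW : ‖w‖ ^ 2 ≤ W.trace := by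
    simpa [trace_sub, trace_vecMulVec, EuclideanSpace.dotProduct_ofLp] using hT.diag_nonneg (i := 1)
  have hZ := sq_le_mul_of_posSemidef_fin_two hT
  simp only [trace_sub, trace_vecMulVec, EuclideanSpace.dotProduct_ofLp,
    real_inner_self_eq_norm_sq] at hZ
  refine ⟨le_of_sq_le_sq (by linarith) hR, le_of_sq_le_sq (by linarith) hε, ?_⟩
  calc z ≤ Z.trace := hz
    _ = ⟪d, w⟫ + (Z.trace - ⟪w, d⟫) := by rw [real_inner_comm]; ring
    _ ≤ ⟪d, w⟫ + √((R ^ 2 - ‖d‖ ^ 2) * (ε ^ 2 - ‖w‖ ^ 2)) := by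
        gcongr
        refine Real.le_sqrt_of_sq_le (hZ.trans ?_)
        exact mul_le_mul (by linarith) (by linarith) (by linarith) (by linarith)
    _ = _ := by rw [Real.sqrt_mul (by linarith)]

end Shor

/-- For `n ≥ 2`, the Shor semidefinite relaxation gives exactly the convex hull of the
inner-product hypograph over Euclidean balls (Corollary 3.3). -/
theorem convexHull_ip_eq_shor (n : ℕ) (hn : 2 ≤ n) (R ε : ℝ) (hR : 0 ≤ R) (hε : 0 ≤ ε) :
    convexHull ℝ
        {p : EuclideanSpace ℝ (Fin n) × EuclideanSpace ℝ (Fin n) × ℝ |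
          p.2.2 ≤ ⟪p.1, p.2.1⟫ ∧ ‖p.1‖ ≤ R ∧ ‖p.2.1‖ ≤ ε} =
      {p : EuclideanSpace ℝ (Fin n) × EuclideanSpace ℝ (Fin n) × ℝ |
        ∃ D W Z : Matrix (Fin n) (Fin n) ℝ,
          (Matrix.fromBlocks D Zᵀ Z W -
            Matrix.vecMulVec (Sum.elim (fun i => p.1 i) (fun i => p.2.1 i))
              (Sum.elim (fun i => p.1 i) (fun i => p.2.1 i))).PosSemidef ∧
          p.2.2 ≤ Z.trace ∧ D.trace ≤ R ^ 2 ∧ W.trace ≤ ε ^ 2} := by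
  change convexHull ℝ (ipHypograph _ R ε) = shorRelaxation (Fin n) R ε
  refine (convexHull_min (ipHypograph_subset_shorRelaxation R ε)
    (convex_shorRelaxation R ε)).antisymm ?_
  exact (shorRelaxation_subset_ipEnvelope hR hε).trans
    (ipEnvelope_subset_convexHull (by rw [finrank_euclideanSpace_fin]; omega) R ε)
end

section
/- Let n ≥ 1, R̄ ≥ 0, ε ≥ 0, and let (d, w, z) ∈ ℝⁿ × ℝⁿ × ℝ satisfy z ≤ ⟨d, w⟩, ‖d‖ ≤ R̄, and ‖w‖ ≤ ε. Then 2·R̄²·‖w‖² + 2·ε²·‖d‖² − 4·ε·R̄·⟨d, w⟩ ≤ (2·ε·R̄ − z)² − z². -/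
open scoped RealInnerProductSpace

/-- Since `(2εR - z)² - z² = 4εR (εR - z)`, bounding `‖w‖` by `ε`, `‖d‖` by `R` and `z` by
`⟪d, w⟫` on the left reduces the estimate to an identity. -/
theorem rotated_mccormick_estimate_of_norm_le {E : Type*} [NormedAddCommGroup E]
    [InnerProductSpace ℝ E] {R ε z : ℝ} {d w : E}
    (hz : z ≤ ⟪d, w⟫) (hd : ‖d‖ ≤ R) (hw : ‖w‖ ≤ ε) :
    2 * R ^ 2 * ‖w‖ ^ 2 + 2 * ε ^ 2 * ‖d‖ ^ 2 - 4 * ε * R * ⟪d, w⟫ ≤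
      (2 * ε * R - z) ^ 2 - z ^ 2 := by
  have hεR : 0 ≤ ε * R := mul_nonneg ((norm_nonneg w).trans hw) ((norm_nonneg d).trans hd)
  have hw_sq : R ^ 2 * ‖w‖ ^ 2 ≤ R ^ 2 * ε ^ 2 :=
    mul_le_mul_of_nonneg_left (pow_le_pow_left₀ (norm_nonneg w) hw 2) (sq_nonneg R)
  have hd_sq : ε ^ 2 * ‖d‖ ^ 2 ≤ ε ^ 2 * R ^ 2 :=
    mul_le_mul_of_nonneg_left (pow_le_pow_left₀ (norm_nonneg d) hd 2) (sq_nonneg ε)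
  have hz' : ε * R * z ≤ ε * R * ⟪d, w⟫ := mul_le_mul_of_nonneg_left hz hεR
  linear_combination 2 * hw_sq + 2 * hd_sq + 4 * hz'

theorem rotated_mccormick_key_estimate_general (n : ℕ) (R ε : ℝ)
    (d w : EuclideanSpace ℝ (Fin n)) (z : ℝ)
    (hz : z ≤ ⟪d, w⟫) (hd : ‖d‖ ≤ R) (hw : ‖w‖ ≤ ε) :
    2 * R ^ 2 * ‖w‖ ^ 2 + 2 * ε ^ 2 * ‖d‖ ^ 2 - 4 * ε * R * ⟪d, w⟫ ≤
      (2 * ε * R - z) ^ 2 - z ^ 2 :=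
  rotated_mccormick_estimate_of_norm_le hz hd hw

/-- The key estimate in the validity proof of the rotated McCormick inequality. -/
theorem rotated_mccormick_key_estimate (n : ℕ) (hn : 1 ≤ n) (R ε : ℝ)
    (hR : 0 ≤ R) (hε : 0 ≤ ε)
    (d w : EuclideanSpace ℝ (Fin n)) (z : ℝ)
    (hz : z ≤ ⟪d, w⟫) (hd : ‖d‖ ≤ R) (hw : ‖w‖ ≤ ε) :
    2 * R ^ 2 * ‖w‖ ^ 2 + 2 * ε ^ 2 * ‖d‖ ^ 2 - 4 * ε * R * ⟪d, w⟫ ≤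
      (2 * ε * R - z) ^ 2 - z ^ 2 :=
  rotated_mccormick_key_estimate_general n R ε d w z hz hd hw
end

section
/- Let R̄ ≥ 0, ε ≥ 0, and let d = (d₁, d₂) ∈ ℝ², w = (w₁, w₂) ∈ ℝ², z ∈ ℝ satisfy z ≤ ⟨d, w⟩, ‖d‖ ≤ R̄, and ‖w‖ ≤ ε. Then √( (R̄·(w₁+w₂) − ε·(d₁+d₂))² + (R̄·(w₁−w₂) − ε·(d₁−d₂))² ) ≤ 2·ε·R̄ − z. -/
/-!
The vector under the square root is `√2` times the coordinate vector of `R • w - ε • d` in the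
basis rotated by `π/4`, so the left-hand side is `√2 ‖R • w - ε • d‖`. Expanding the norm and
using `‖d‖ ≤ R`, `‖w‖ ≤ ε` gives `‖R • w - ε • d‖² ≤ 2 R ε (R ε - ⟪d, w⟫)`, and with `a = ε R`,
`z ≤ ⟪d, w⟫` the bound follows from AM–GM in the form `√(4 a (a - z)) ≤ a + (a - z)`.
-/

open scoped RealInnerProductSpace

theorem Real.sqrt_four_mul_mul_le_add {x y : ℝ} (h : 0 ≤ x + y) : √(4 * x * y) ≤ x + y :=
  Real.sqrt_le_iff.2 ⟨h, by nlinarith [sq_nonneg (x - y)]⟩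

theorem EuclideanSpace.sq_add_add_sq_sub_eq_two_mul_norm_sq (x : EuclideanSpace ℝ (Fin 2)) :
    (x 0 + x 1) ^ 2 + (x 0 - x 1) ^ 2 = 2 * ‖x‖ ^ 2 := by
  rw [EuclideanSpace.norm_sq_eq, Fin.sum_univ_two, Real.norm_eq_abs, Real.norm_eq_abs, sq_abs,
    sq_abs]
  ring

theorem norm_smul_sub_smul_sq_le {E : Type*} [NormedAddCommGroup E] [InnerProductSpace ℝ E]
    {R ε : ℝ} {d w : E} (hd : ‖d‖ ≤ R) (hw : ‖w‖ ≤ ε) :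
    ‖R • w - ε • d‖ ^ 2 ≤ 2 * (R * ε) * (R * ε - ⟪d, w⟫) := by
  have hR : 0 ≤ R := (norm_nonneg d).trans hd
  have hε : 0 ≤ ε := (norm_nonneg w).trans hw
  have hd2 : ‖d‖ ^ 2 ≤ R ^ 2 := pow_le_pow_left₀ (norm_nonneg d) hd 2
  have hw2 : ‖w‖ ^ 2 ≤ ε ^ 2 := pow_le_pow_left₀ (norm_nonneg w) hw 2
  rw [norm_sub_sq_real, norm_smul, norm_smul, real_inner_smul_left, real_inner_smul_right,
    real_inner_comm, Real.norm_of_nonneg hR, Real.norm_of_nonneg hε]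
  nlinarith [mul_le_mul_of_nonneg_left hw2 (sq_nonneg R),
    mul_le_mul_of_nonneg_left hd2 (sq_nonneg ε)]

theorem loose_rotated_mccormick_valid_general (R ε : ℝ)
    (d w : EuclideanSpace ℝ (Fin 2)) (z : ℝ)
    (hz : z ≤ ⟪d, w⟫) (hd : ‖d‖ ≤ R) (hw : ‖w‖ ≤ ε) :
    Real.sqrt ((R * (w 0 + w 1) - ε * (d 0 + d 1)) ^ 2 +
        (R * (w 0 - w 1) - ε * (d 0 - d 1)) ^ 2) ≤ 2 * ε * R - z := by
  have hεR : 0 ≤ ε * R := mul_nonneg ((norm_nonneg w).trans hw) ((norm_nonneg d).trans hd)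
  have hinner : ⟪d, w⟫ ≤ ε * R := (real_inner_le_norm d w).trans <| by
    rw [mul_comm ε]; exact mul_le_mul hd hw (norm_nonneg w) ((norm_nonneg d).trans hd)
  have hrot : (R * (w 0 + w 1) - ε * (d 0 + d 1)) ^ 2 + (R * (w 0 - w 1) - ε * (d 0 - d 1)) ^ 2
      = 2 * ‖R • w - ε • d‖ ^ 2 := by
    rw [← EuclideanSpace.sq_add_add_sq_sub_eq_two_mul_norm_sq]
    simp only [PiLp.sub_apply, PiLp.smul_apply, smul_eq_mul]
    ring
  have hsq := norm_smul_sub_smul_sq_le hd hw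
  calc √((R * (w 0 + w 1) - ε * (d 0 + d 1)) ^ 2 + (R * (w 0 - w 1) - ε * (d 0 - d 1)) ^ 2)
      ≤ √(4 * (ε * R) * (ε * R - z)) := by
        rw [hrot]
        exact Real.sqrt_le_sqrt (by nlinarith [mul_nonneg hεR (sub_nonneg.2 hz)])
    _ ≤ ε * R + (ε * R - z) := Real.sqrt_four_mul_mul_le_add (by linarith)
    _ = 2 * ε * R - z := by ring

/-- The loose rotated McCormick inequality (equation (13)) is valid on `Z^IP_2`. -/
theorem loose_rotated_mccormick_valid (R ε : ℝ) (hR : 0 ≤ R) (hε : 0 ≤ ε)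
    (d w : EuclideanSpace ℝ (Fin 2)) (z : ℝ)
    (hz : z ≤ ⟪d, w⟫) (hd : ‖d‖ ≤ R) (hw : ‖w‖ ≤ ε) :
    Real.sqrt ((R * (w 0 + w 1) - ε * (d 0 + d 1)) ^ 2 +
        (R * (w 0 - w 1) - ε * (d 0 - d 1)) ^ 2) ≤ 2 * ε * R - z :=
  loose_rotated_mccormick_valid_general R ε d w z hz hd hw
end

section
/- Let B, C, V be real numbers with B ≥ 1, C ≥ 0, V ≥ 0, and fix w ∈ ℝ². Suppose d ∈ ℝ² satisfies either d = 0, or d ≠ 0 together with ⟨d, w⟩ ≥ 0 and ‖d‖ ≤ V·(1 + C·(⟨d, w⟩/‖d‖)^B). Then there exist d^c, d^w ∈ ℝ² with d = d^c + d^w, ‖d^c‖ ≤ V, and ‖d^w‖² ≤ C·V·‖w‖^{B−1}·⟨d^w, w⟩. -/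
open scoped RealInnerProductSpace

/-- The relaxed spread set `S^∠` with wind-assisted constant `K = 2σ(‖w‖)`. -/
def relaxedSpreadSet {E : Type*} [NormedAddCommGroup E] [InnerProductSpace ℝ E]
    (V K : ℝ) (w : E) : Set E :=
  {d | ∃ dc dw : E, d = dc + dw ∧ ‖dc‖ ≤ V ∧ ‖dw‖ ^ 2 ≤ K * ⟪dw, w⟫}

section RelaxedSpreadSet

variable {E : Type*} [NormedAddCommGroup E] [InnerProductSpace ℝ E] {V K : ℝ} {w d : E}

theorem mem_relaxedSpreadSet_of_norm_le (h : ‖d‖ ≤ V) : d ∈ relaxedSpreadSet V K w :=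
  ⟨d, 0, by simp, h, by simp⟩

/-- Split `d` along its own direction into a part of length `V` and a remainder of
length `‖d‖ - V`. -/
theorem mem_relaxedSpreadSet_of_sub_le (hV : 0 ≤ V) (hVd : V < ‖d‖)
    (h : ‖d‖ - V ≤ K * (⟪d, w⟫ / ‖d‖)) : d ∈ relaxedSpreadSet V K w := by
  have hd : 0 < ‖d‖ := hV.trans_lt hVd
  have hnorm_dw : ‖(1 - V / ‖d‖) • d‖ = ‖d‖ - V := by
    have : 0 ≤ 1 - V / ‖d‖ := sub_nonneg.2 ((div_le_one hd).2 hVd.le)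
    rw [norm_smul, Real.norm_of_nonneg this, sub_mul, one_mul, div_mul_cancel₀ _ hd.ne']
  have hinner_dw : ⟪(1 - V / ‖d‖) • d, w⟫ = (‖d‖ - V) * (⟪d, w⟫ / ‖d‖) := by
    rw [real_inner_smul_left]
    field_simp
  refine ⟨(V / ‖d‖) • d, (1 - V / ‖d‖) • d, ?_, ?_, ?_⟩
  · rw [← add_smul, add_sub_cancel, one_smul]
  · rw [norm_smul, Real.norm_of_nonneg (div_nonneg hV hd.le), div_mul_cancel₀ _ hd.ne']
  · rw [hnorm_dw, hinner_dw, sq, mul_left_comm]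
    exact mul_le_mul_of_nonneg_left h (sub_nonneg.2 hVd.le)

end RelaxedSpreadSet

theorem Real.rpow_le_rpow_sub_one_mul {t s B : ℝ} (ht : 0 ≤ t) (hts : t ≤ s) (hB : 1 ≤ B) :
    t ^ B ≤ s ^ (B - 1) * t := by
  calc t ^ B = t ^ (B - 1) * t := by
        rw [← Real.rpow_add_one' ht (by linarith), sub_add_cancel]
    _ ≤ s ^ (B - 1) * t :=
        mul_le_mul_of_nonneg_right (Real.rpow_le_rpow ht hts (by linarith)) ht

theorem rothermel_excess_le {E : Type*} [NormedAddCommGroup E] [InnerProductSpace ℝ E]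
    {B C V : ℝ} {w d : E} (hB : 1 ≤ B) (hC : 0 ≤ C) (hV : 0 ≤ V) (hdw : 0 ≤ ⟪d, w⟫)
    (hle : ‖d‖ ≤ V * (1 + C * (⟪d, w⟫ / ‖d‖) ^ B)) :
    ‖d‖ - V ≤ C * V * ‖w‖ ^ (B - 1) * (⟪d, w⟫ / ‖d‖) := by
  have ht : 0 ≤ ⟪d, w⟫ / ‖d‖ := div_nonneg hdw (norm_nonneg d)
  have htw : ⟪d, w⟫ / ‖d‖ ≤ ‖w‖ :=
    div_le_of_le_mul₀ (norm_nonneg d) (norm_nonneg w)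
      ((real_inner_le_norm d w).trans_eq (mul_comm _ _))
  calc ‖d‖ - V ≤ C * V * (⟪d, w⟫ / ‖d‖) ^ B := by linarith
    _ ≤ C * V * (‖w‖ ^ (B - 1) * (⟪d, w⟫ / ‖d‖)) :=
        mul_le_mul_of_nonneg_left (Real.rpow_le_rpow_sub_one_mul ht htw hB) (by positivity)
    _ = C * V * ‖w‖ ^ (B - 1) * (⟪d, w⟫ / ‖d‖) := by ring

/-- Containment part of Proposition 3.9: every point of the Rothermel-inspired spread set
lies in the relaxed spread set `S^∠`. -/
theorem rothermel_subset_relaxed (B C V : ℝ) (hB : 1 ≤ B) (hC : 0 ≤ C) (hV : 0 ≤ V)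
    (w d : EuclideanSpace ℝ (Fin 2))
    (h : d = 0 ∨ (d ≠ 0 ∧ 0 ≤ ⟪d, w⟫ ∧ ‖d‖ ≤ V * (1 + C * (⟪d, w⟫ / ‖d‖) ^ B))) :
    ∃ dc dw : EuclideanSpace ℝ (Fin 2),
      d = dc + dw ∧ ‖dc‖ ≤ V ∧ ‖dw‖ ^ 2 ≤ C * V * ‖w‖ ^ (B - 1) * ⟪dw, w⟫ := by
  change d ∈ relaxedSpreadSet V (C * V * ‖w‖ ^ (B - 1)) w
  rcases h with rfl | ⟨-, hdw, hle⟩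
  · exact mem_relaxedSpreadSet_of_norm_le (by simpa using hV)
  rcases le_or_gt ‖d‖ V with hdV | hVd
  · exact mem_relaxedSpreadSet_of_norm_le hdV
  · exact mem_relaxedSpreadSet_of_sub_le hV hVd (rothermel_excess_le hB hC hV hdw hle)
end

section
/- Let B, C, V be real numbers with B ≥ 1, C ≥ 0, V ≥ 0, and fix w, x ∈ ℝ². Then {d^c + d^w + x : d^c, d^w ∈ ℝ², ‖d^c‖ ≤ V, ‖d^w‖² ≤ C·V·‖w‖^{B−1}·⟨d^w, w⟩} = B_{τ}(σ·w + x), the closed Euclidean ball centered at σ·w + x of radius τ, where σ := (C·V/2)·‖w‖^{B−1} and τ := V + (C·V/2)·‖w‖^B. -/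
/-!
Completing the square turns the constraint `‖d^w‖² ≤ 2σ⟪d^w, w⟫` into `‖d^w - σw‖ ≤ σ‖w‖`,
so the relaxed spread set is the translate by `x` of the Minkowski sum of two closed balls,
`B_V(0) + B_{σ‖w‖}(σw) = B_{V + σ‖w‖}(σw)`, and `σ‖w‖ = (C·V/2)·‖w‖^B` because `B ≠ 0`.
-/

open scoped RealInnerProductSpace Pointwise

open Metric

theorem Set.setOf_exists_add_add_eq {α : Type*} [Add α] (s t : Set α) (x : α) :
    {y : α | ∃ a b : α, y = a + b + x ∧ a ∈ s ∧ b ∈ t} = s + t + {x} := by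
  ext y
  simp only [Set.mem_ofPred_eq, Set.mem_add, Set.mem_singleton_iff, exists_eq_left]
  constructor
  · rintro ⟨a, b, rfl, ha, hb⟩
    exact ⟨_, ⟨a, ha, b, hb, rfl⟩, rfl⟩
  · rintro ⟨_, ⟨a, ha, b, hb, rfl⟩, rfl⟩
    exact ⟨a, b, rfl, ha, hb⟩

theorem setOf_norm_sq_le_two_mul_inner_eq_closedBall {E : Type*} [NormedAddCommGroup E]
    [InnerProductSpace ℝ E] (v : E) :
    {d : E | ‖d‖ ^ 2 ≤ 2 * ⟪d, v⟫} = closedBall v ‖v‖ := by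
  ext d
  rw [Set.mem_ofPred_eq, mem_closedBall, dist_eq_norm,
    ← sq_le_sq₀ (norm_nonneg _) (norm_nonneg _), norm_sub_sq_real]
  constructor <;> intro h <;> linarith

theorem Real.rpow_sub_one_mul_self {x y : ℝ} (hx : 0 ≤ x) (hy : y ≠ 0) :
    x ^ (y - 1) * x = x ^ y := by
  conv_rhs => rw [← sub_add_cancel y 1, Real.rpow_add' hx (by simpa using hy), Real.rpow_one]

/-- Ball characterization in Proposition 3.9: the relaxed spread set `S^∠(w, x)` is the
closed Euclidean ball of radius `τ = V + (C·V/2)·‖w‖^B` centered at `σ·w + x`, with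
`σ = (C·V/2)·‖w‖^(B-1)`. -/
theorem relaxed_spread_eq_closedBall (B C V : ℝ) (hB : 1 ≤ B) (hC : 0 ≤ C) (hV : 0 ≤ V)
    (w x : EuclideanSpace ℝ (Fin 2)) :
    {y : EuclideanSpace ℝ (Fin 2) | ∃ dc dw : EuclideanSpace ℝ (Fin 2),
        y = dc + dw + x ∧ ‖dc‖ ≤ V ∧ ‖dw‖ ^ 2 ≤ C * V * ‖w‖ ^ (B - 1) * ⟪dw, w⟫} =
      Metric.closedBall ((C * V / 2 * ‖w‖ ^ (B - 1)) • w + x)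
        (V + C * V / 2 * ‖w‖ ^ B) := by
  set σ : ℝ := C * V / 2 * ‖w‖ ^ (B - 1)
  have hσ : 0 ≤ σ := by positivity
  have hdw_ball : {dw : EuclideanSpace ℝ (Fin 2) |
      ‖dw‖ ^ 2 ≤ C * V * ‖w‖ ^ (B - 1) * ⟪dw, w⟫} = closedBall (σ • w) ‖σ • w‖ := by
    rw [← setOf_norm_sq_le_two_mul_inner_eq_closedBall]
    congr! 3 with dw
    rw [real_inner_smul_right]
    ring
  have hradius : ‖σ • w‖ = C * V / 2 * ‖w‖ ^ B := by
    rw [norm_smul, Real.norm_of_nonneg hσ, mul_assoc,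
      Real.rpow_sub_one_mul_self (norm_nonneg w) (by linarith)]
  calc _ = closedBall (0 : EuclideanSpace ℝ (Fin 2)) V + closedBall (σ • w) ‖σ • w‖ + {x} := by
        rw [← hdw_ball, ← Set.setOf_exists_add_add_eq]
        simp only [mem_closedBall_zero_iff, Set.mem_ofPred_eq]
    _ = closedBall (σ • w + x) (V + C * V / 2 * ‖w‖ ^ B) := by
        rw [closedBall_add_closedBall hV (norm_nonneg _), zero_add, closedBall_add_singleton,
          hradius]
end

section
/- Let B, C, V, ε be real numbers with B ≥ 1, C ≥ 0, V ≥ 0, ε ≥ 0, and let w̄, w ∈ ℝ² with ‖w − w̄‖ ≤ ε. Set ν := ‖w̄‖ + ε. Suppose d ∈ ℝ² satisfies d = d^c + d^w for some d^c, d^w ∈ ℝ² with ‖d^c‖ ≤ V and ‖d^w‖² ≤ C·V·‖w‖^{B−1}·⟨d^w, w⟩. Then ‖d − (C·V/2)·ν^{B−1}·w‖ ≤ V + (C·V/2)·ν^B. -/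
/-!
Completing the square, `‖x‖² ≤ 2σ⟪x, w⟫` says exactly that `x` lies in the closed ball of
radius `|σ|‖w‖` about `σ • w`. The wind component `d^w` satisfies this with
`σ = (C V / 2) ν^{B-1}`, once `‖w‖^{B-1}` is enlarged to `ν^{B-1}` (legitimate since
`⟪d^w, w⟫ ≥ 0` and `‖w‖ ≤ ν`); the radius `σ‖w‖ ≤ σν = (C V / 2) ν^B`, and the control
component `d^c` adds at most `V`.
-/

open scoped RealInnerProductSpace

section InnerProductSpace

variable {E : Type*} [NormedAddCommGroup E] [InnerProductSpace ℝ E] {x w : E}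

theorem real_inner_nonneg_of_norm_sq_le_mul_inner {c : ℝ} (hc : 0 ≤ c)
    (h : ‖x‖ ^ 2 ≤ c * ⟪x, w⟫) : 0 ≤ ⟪x, w⟫ := by
  by_contra! hneg
  have hx : x = 0 := by
    have : ‖x‖ ^ 2 ≤ 0 := h.trans (mul_nonpos_of_nonneg_of_nonpos hc hneg.le)
    exact norm_eq_zero.mp (pow_eq_zero_iff two_ne_zero |>.mp (le_antisymm this (by positivity)))
  simp [hx] at hneg

theorem norm_sub_smul_le_of_norm_sq_le_two_mul_inner {σ : ℝ}
    (h : ‖x‖ ^ 2 ≤ 2 * σ * ⟪x, w⟫) : ‖x - σ • w‖ ≤ |σ| * ‖w‖ := by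
  have hsq : ‖x - σ • w‖ ^ 2 ≤ (|σ| * ‖w‖) ^ 2 := by
    rw [norm_sub_sq_real, real_inner_smul_right, norm_smul, Real.norm_eq_abs, mul_pow]
    linarith
  exact pow_le_pow_iff_left₀ (norm_nonneg _) (by positivity) two_ne_zero |>.mp hsq

theorem norm_sub_smul_le_of_norm_sq_le_rpow_mul_inner {B K ν : ℝ} (hB : 1 ≤ B) (hK : 0 ≤ K)
    (hwν : ‖w‖ ≤ ν) (h : ‖x‖ ^ 2 ≤ K * ‖w‖ ^ (B - 1) * ⟪x, w⟫) :
    ‖x - (K / 2 * ν ^ (B - 1)) • w‖ ≤ K / 2 * ν ^ B := by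
  have hν : 0 ≤ ν := (norm_nonneg w).trans hwν
  have hinner : 0 ≤ ⟪x, w⟫ := real_inner_nonneg_of_norm_sq_le_mul_inner (by positivity) h
  have hσ : 0 ≤ K / 2 * ν ^ (B - 1) := by positivity
  have hx : ‖x‖ ^ 2 ≤ 2 * (K / 2 * ν ^ (B - 1)) * ⟪x, w⟫ :=
    calc ‖x‖ ^ 2 ≤ K * ‖w‖ ^ (B - 1) * ⟪x, w⟫ := h
      _ ≤ K * ν ^ (B - 1) * ⟪x, w⟫ := by gcongr
      _ = 2 * (K / 2 * ν ^ (B - 1)) * ⟪x, w⟫ := by ring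
  calc ‖x - (K / 2 * ν ^ (B - 1)) • w‖ ≤ |K / 2 * ν ^ (B - 1)| * ‖w‖ :=
        norm_sub_smul_le_of_norm_sq_le_two_mul_inner hx
    _ ≤ K / 2 * ν ^ (B - 1) * ν := by rw [abs_of_nonneg hσ]; gcongr
    _ = K / 2 * ν ^ B := by
        rw [mul_assoc, ← Real.rpow_add_one' hν (by linarith), sub_add_cancel]

end InnerProductSpace

theorem relaxed_spread_subset_ball_spread_general (B C V ε : ℝ)
    (hB : 1 ≤ B) (hC : 0 ≤ C)
    (wbar w : EuclideanSpace ℝ (Fin 2)) (hw : ‖w - wbar‖ ≤ ε)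
    (d dc dw : EuclideanSpace ℝ (Fin 2)) (hd : d = dc + dw) (hdc : ‖dc‖ ≤ V)
    (hdw : ‖dw‖ ^ 2 ≤ C * V * ‖w‖ ^ (B - 1) * ⟪dw, w⟫) :
    ‖d - (C * V / 2 * (‖wbar‖ + ε) ^ (B - 1)) • w‖ ≤
      V + C * V / 2 * (‖wbar‖ + ε) ^ B := by
  have hV : 0 ≤ V := (norm_nonneg dc).trans hdc
  have hwν : ‖w‖ ≤ ‖wbar‖ + ε := (norm_le_norm_add_norm_sub' w wbar).trans (by gcongr)
  have hwind := norm_sub_smul_le_of_norm_sq_le_rpow_mul_inner hB (by positivity) hwν hdw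
  calc ‖d - (C * V / 2 * (‖wbar‖ + ε) ^ (B - 1)) • w‖
        = ‖dc + (dw - (C * V / 2 * (‖wbar‖ + ε) ^ (B - 1)) • w)‖ := by rw [hd, add_sub_assoc]
    _ ≤ V + C * V / 2 * (‖wbar‖ + ε) ^ B := (norm_add_le _ _).trans (add_le_add hdc hwind)

/-- Pointwise containment underlying Proposition 3.10: a point of the relaxed spread set
`S^∠(w, x)`, with wind `w` in the uncertainty ball around the forecast `w̄`, lies in the
ball spread set `S^∘(w, x)`. -/
theorem relaxed_spread_subset_ball_spread (B C V ε : ℝ)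
    (hB : 1 ≤ B) (hC : 0 ≤ C) (hV : 0 ≤ V) (hε : 0 ≤ ε)
    (wbar w : EuclideanSpace ℝ (Fin 2)) (hw : ‖w - wbar‖ ≤ ε)
    (d dc dw : EuclideanSpace ℝ (Fin 2)) (hd : d = dc + dw) (hdc : ‖dc‖ ≤ V)
    (hdw : ‖dw‖ ^ 2 ≤ C * V * ‖w‖ ^ (B - 1) * ⟪dw, w⟫) :
    ‖d - (C * V / 2 * (‖wbar‖ + ε) ^ (B - 1)) • w‖ ≤
      V + C * V / 2 * (‖wbar‖ + ε) ^ B :=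
  relaxed_spread_subset_ball_spread_general B C V ε hB hC wbar w hw d dc dw hd hdc hdw
end

section
/- Let B, C, V, ε be real numbers with B ≥ 1, C ≥ 0, V ≥ 0, ε ≥ 0, and let w̄, x ∈ ℝ². Set ν := ‖w̄‖ + ε, σ̄ := (C·V/2)·ν^{B−1}, and τ̄ := V + (C·V/2)·ν^B. Define A₁ := {(w, x + d) ∈ ℝ² × ℝ² : ‖w − w̄‖ ≤ ε and d = d^c + d^w for some d^c, d^w ∈ ℝ² with ‖d^c‖ ≤ V and ‖d^w‖² ≤ C·V·‖w‖^{B−1}·⟨d^w, w⟩} and A₂ := {(w, x′) ∈ ℝ² × ℝ² : ‖w − w̄‖ ≤ ε and ‖x′ − σ̄·w − x‖ ≤ τ̄}. Then the convex hull of A₁ is contained in A₂. -/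
/-!
Writing `σ = C V / 2 · ‖w‖^(B-1)`, the wind constraint `‖d‖² ≤ 2σ⟪d, w⟫` says exactly that `d`
lies in the closed ball of centre `σ w` and radius `σ ‖w‖`. These balls all pass through `0` and
grow with `σ`, so over the wind ball `‖w‖ ≤ ν` they sit inside the one for
`σ̄ = C V / 2 · ν^(B-1)`, whence `‖d - σ̄ w‖ ≤ σ̄ ν = C V / 2 · ν^B`. Adding `d^c` gives the
bound on a point of `A₁`, and `A₂` is convex, being cut out by two affine ball constraints.
-/

open scoped RealInnerProductSpace

open Metric

section InnerProductSpace

variable {E : Type*} [SeminormedAddCommGroup E] [InnerProductSpace ℝ E]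

theorem norm_sq_le_two_mul_inner_iff (d w : E) (s : ℝ) :
    ‖d‖ ^ 2 ≤ 2 * s * ⟪d, w⟫ ↔ ‖d - s • w‖ ≤ |s| * ‖w‖ := by
  have hexpand : ‖d - s • w‖ ^ 2 = ‖d‖ ^ 2 - 2 * s * ⟪d, w⟫ + (|s| * ‖w‖) ^ 2 := by
    rw [norm_sub_sq_real, real_inner_smul_right, norm_smul, Real.norm_eq_abs]
    ring
  rw [← sq_le_sq₀ (norm_nonneg _) (by positivity), hexpand]
  constructor <;> intro h <;> linarith

end InnerProductSpace

section NormedSpace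

variable {E : Type*} [SeminormedAddCommGroup E] [NormedSpace ℝ E]

theorem norm_sub_smul_le_of_le {d w : E} {s t : ℝ} (hst : s ≤ t)
    (hd : ‖d - s • w‖ ≤ s * ‖w‖) : ‖d - t • w‖ ≤ t * ‖w‖ :=
  calc ‖d - t • w‖ = ‖(d - s • w) - (t - s) • w‖ := by rw [sub_smul]; abel_nf
    _ ≤ ‖d - s • w‖ + (t - s) * ‖w‖ := (norm_sub_le _ _).trans_eq <| by
      rw [norm_smul, Real.norm_of_nonneg (sub_nonneg.mpr hst)]
    _ ≤ t * ‖w‖ := by linarith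

theorem convex_setOf_norm_sub_le_and_norm_sub_smul_sub_le (a x : E) (r s t : ℝ) :
    Convex ℝ {p : E × E | ‖p.1 - a‖ ≤ r ∧ ‖p.2 - s • p.1 - x‖ ≤ t} := by
  have hfst := (convex_closedBall a r).linear_preimage (LinearMap.fst ℝ E E)
  have hsnd := (convex_closedBall x t).linear_preimage
    (LinearMap.snd ℝ E E - s • LinearMap.fst ℝ E E)
  have hset : {p : E × E | ‖p.1 - a‖ ≤ r ∧ ‖p.2 - s • p.1 - x‖ ≤ t} =
      LinearMap.fst ℝ E E ⁻¹' closedBall a r ∩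
        (LinearMap.snd ℝ E E - s • LinearMap.fst ℝ E E) ⁻¹' closedBall x t := by
    ext p
    simp [dist_eq_norm, sub_sub]
  exact hset ▸ hfst.inter hsnd

end NormedSpace

theorem norm_sub_smul_le_of_norm_sq_le_mul_rpow_mul_inner
    {E : Type*} [SeminormedAddCommGroup E] [InnerProductSpace ℝ E]
    {B k ν : ℝ} (hB : 1 ≤ B) (hk : 0 ≤ k) {d w : E} (hw : ‖w‖ ≤ ν)
    (hd : ‖d‖ ^ 2 ≤ k * ‖w‖ ^ (B - 1) * ⟪d, w⟫) :
    ‖d - (k / 2 * ν ^ (B - 1)) • w‖ ≤ k / 2 * ν ^ B := by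
  have hν : 0 ≤ ν := (norm_nonneg w).trans hw
  have hs : 0 ≤ k / 2 * ‖w‖ ^ (B - 1) := by positivity
  have hball : ‖d - (k / 2 * ‖w‖ ^ (B - 1)) • w‖ ≤ k / 2 * ‖w‖ ^ (B - 1) * ‖w‖ := by
    have h := (norm_sq_le_two_mul_inner_iff d w (k / 2 * ‖w‖ ^ (B - 1))).mp (by linarith)
    rwa [abs_of_nonneg hs] at h
  have hmono : k / 2 * ‖w‖ ^ (B - 1) ≤ k / 2 * ν ^ (B - 1) := by gcongr
  have hνB : ν ^ B = ν ^ (B - 1) * ν := by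
    rw [← Real.rpow_add_one' hν (by linarith : (0 : ℝ) < B - 1 + 1).ne', sub_add_cancel]
  calc ‖d - (k / 2 * ν ^ (B - 1)) • w‖ ≤ k / 2 * ν ^ (B - 1) * ‖w‖ :=
        norm_sub_smul_le_of_le hmono hball
    _ ≤ k / 2 * ν ^ (B - 1) * ν := by gcongr
    _ = k / 2 * ν ^ B := by rw [hνB, mul_assoc]

theorem convexHull_relaxed_subset_ball_general (B C V ε : ℝ)
    (hB : 1 ≤ B) (hC : 0 ≤ C) (hV : 0 ≤ V)
    (wbar x : EuclideanSpace ℝ (Fin 2)) :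
    convexHull ℝ
        {p : EuclideanSpace ℝ (Fin 2) × EuclideanSpace ℝ (Fin 2) |
          ‖p.1 - wbar‖ ≤ ε ∧
          ∃ dc dw : EuclideanSpace ℝ (Fin 2),
            p.2 = x + (dc + dw) ∧ ‖dc‖ ≤ V ∧
            ‖dw‖ ^ 2 ≤ C * V * ‖p.1‖ ^ (B - 1) * ⟪dw, p.1⟫} ⊆
      {p : EuclideanSpace ℝ (Fin 2) × EuclideanSpace ℝ (Fin 2) |
        ‖p.1 - wbar‖ ≤ ε ∧
        ‖p.2 - (C * V / 2 * (‖wbar‖ + ε) ^ (B - 1)) • p.1 - x‖ ≤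
          V + C * V / 2 * (‖wbar‖ + ε) ^ B} := by
  refine convexHull_min ?_ (convex_setOf_norm_sub_le_and_norm_sub_smul_sub_le _ _ _ _ _)
  rintro ⟨w, y⟩ ⟨hw, dc, dw, rfl, hdc, hdw⟩
  have hwν : ‖w‖ ≤ ‖wbar‖ + ε := by linarith [norm_le_norm_add_norm_sub' w wbar]
  have hdw' := norm_sub_smul_le_of_norm_sq_le_mul_rpow_mul_inner hB (mul_nonneg hC hV) hwν hdw
  refine ⟨hw, ?_⟩
  calc ‖x + (dc + dw) - (C * V / 2 * (‖wbar‖ + ε) ^ (B - 1)) • w - x‖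
      = ‖dc + (dw - (C * V / 2 * (‖wbar‖ + ε) ^ (B - 1)) • w)‖ := by abel_nf
    _ ≤ ‖dc‖ + ‖dw - (C * V / 2 * (‖wbar‖ + ε) ^ (B - 1)) • w‖ := norm_add_le _ _
    _ ≤ V + C * V / 2 * (‖wbar‖ + ε) ^ B := add_le_add hdc hdw'

/-- Containment assertion of Proposition 3.10: the convex hull of the graph `A₁` of the
relaxed spread set over the wind uncertainty ball is contained in the graph `A₂` of the
ball spread set. -/
theorem convexHull_relaxed_subset_ball (B C V ε : ℝ)
    (hB : 1 ≤ B) (hC : 0 ≤ C) (hV : 0 ≤ V) (hε : 0 ≤ ε)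
    (wbar x : EuclideanSpace ℝ (Fin 2)) :
    convexHull ℝ
        {p : EuclideanSpace ℝ (Fin 2) × EuclideanSpace ℝ (Fin 2) |
          ‖p.1 - wbar‖ ≤ ε ∧
          ∃ dc dw : EuclideanSpace ℝ (Fin 2),
            p.2 = x + (dc + dw) ∧ ‖dc‖ ≤ V ∧
            ‖dw‖ ^ 2 ≤ C * V * ‖p.1‖ ^ (B - 1) * ⟪dw, p.1⟫} ⊆
      {p : EuclideanSpace ℝ (Fin 2) × EuclideanSpace ℝ (Fin 2) |
        ‖p.1 - wbar‖ ≤ ε ∧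
        ‖p.2 - (C * V / 2 * (‖wbar‖ + ε) ^ (B - 1)) • p.1 - x‖ ≤
          V + C * V / 2 * (‖wbar‖ + ε) ^ B} :=
  convexHull_relaxed_subset_ball_general B C V ε hB hC hV wbar x
end

section
/- Let B, C, V, ε be real numbers with B ≥ 1, C ≥ 0, V ≥ 0, ε ≥ 0, and let x ∈ ℝ². Define σ(ν) := (C·V/2)·ν^{B−1} and τ(ν) := V + (C·V/2)·ν^B for ν ≥ 0. Then the convex hull of the set {(w, x′) ∈ ℝ² × ℝ² : ‖w‖ ≤ ε and ‖x′ − σ(‖w‖)·w − x‖ ≤ τ(‖w‖)} equals the set {(w, x′) ∈ ℝ² × ℝ² : ‖w‖ ≤ ε and ‖x′ − σ(ε)·w − x‖ ≤ τ(ε)}. -/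
/-!
Write `k = C·V/2`, `c = k·ε^(B-1)` and `r = V + k·ε^B`. The relaxed set lies in the outer set:
for `‖w‖ ≤ ε`, moving the centre from `k‖w‖^(B-1)·w` to `c·w` costs at most
`k(ε^(B-1) - ‖w‖^(B-1))‖w‖ ≤ kε^B - k‖w‖^B`, which is exactly the gain in radius. Conversely, on the
sphere `‖w‖ = ε` both sets agree, and the shear `(w, x') ↦ (w, x' - c·w)` maps the sphere part to
`sphere 0 ε × closedBall x r`, whose convex hull `closedBall 0 ε × closedBall x r` is the image of
the outer set.
-/

open Metric

theorem LinearEquiv.convexHull_preimage {𝕜 E F : Type*} [Semiring 𝕜] [PartialOrder 𝕜]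
    [AddCommMonoid E] [AddCommMonoid F] [Module 𝕜 E] [Module 𝕜 F] (e : E ≃ₗ[𝕜] F) (s : Set F) :
    convexHull 𝕜 (e ⁻¹' s) = e ⁻¹' convexHull 𝕜 s := by
  rw [← e.image_symm_eq_preimage, ← e.image_symm_eq_preimage]
  exact (e.symm.toLinearMap.image_convexHull s).symm

theorem convexHull_setOf_fst_mem_and_sub_smul_mem {𝕜 E : Type*} [Field 𝕜] [LinearOrder 𝕜]
    [IsStrictOrderedRing 𝕜] [AddCommGroup E] [Module 𝕜 E] (c : 𝕜) (s t : Set E) :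
    convexHull 𝕜 {p : E × E | p.1 ∈ s ∧ p.2 - c • p.1 ∈ t} =
      {p : E × E | p.1 ∈ convexHull 𝕜 s ∧ p.2 - c • p.1 ∈ convexHull 𝕜 t} := by
  let shear : (E × E) ≃ₗ[𝕜] E × E :=
    (LinearEquiv.refl 𝕜 E).skewProd (LinearEquiv.refl 𝕜 E) (-c • LinearMap.id)
  have preimage_shear (u v : Set E) : shear ⁻¹' u ×ˢ v = {p | p.1 ∈ u ∧ p.2 - c • p.1 ∈ v} := by
    ext p
    simp [shear, sub_eq_add_neg]
  rw [← preimage_shear, shear.convexHull_preimage, convexHull_prod, preimage_shear]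

section NormedSpace

variable {E : Type*} [NormedAddCommGroup E] [NormedSpace ℝ E]

theorem convexHull_setOf_norm_eq_and_norm_sub_smul_le [Nontrivial E] {ε : ℝ} (hε : 0 ≤ ε)
    (c r : ℝ) (x : E) :
    convexHull ℝ {p : E × E | ‖p.1‖ = ε ∧ ‖p.2 - c • p.1 - x‖ ≤ r} =
      {p : E × E | ‖p.1‖ ≤ ε ∧ ‖p.2 - c • p.1 - x‖ ≤ r} := by
  have h := convexHull_setOf_fst_mem_and_sub_smul_mem c (sphere (0 : E) ε) (closedBall x r)
  rw [convexHull_sphere_eq_closedBall _ hε, (convex_closedBall x r).convexHull_eq] at h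
  simpa only [mem_sphere_zero_iff_norm, mem_closedBall_iff_norm, sub_zero] using h

theorem norm_sub_rpow_smul_le_of_norm_le {B k V ε : ℝ} (hB : 1 ≤ B) (hk : 0 ≤ k) {w y x : E}
    (hw : ‖w‖ ≤ ε) (h : ‖y - (k * ‖w‖ ^ (B - 1)) • w - x‖ ≤ V + k * ‖w‖ ^ B) :
    ‖y - (k * ε ^ (B - 1)) • w - x‖ ≤ V + k * ε ^ B := by
  have rpow_sub_one_mul {t : ℝ} (ht : 0 ≤ t) : t ^ (B - 1) * t = t ^ B := by
    simpa using (Real.rpow_add_one' ht (y := B - 1) (by linarith)).symm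
  have hε : 0 ≤ ε := (norm_nonneg w).trans hw
  have hgap : 0 ≤ ε ^ (B - 1) - ‖w‖ ^ (B - 1) :=
    sub_nonneg.mpr (Real.rpow_le_rpow (norm_nonneg w) hw (by linarith))
  calc ‖y - (k * ε ^ (B - 1)) • w - x‖
      = ‖(y - (k * ‖w‖ ^ (B - 1)) • w - x) - (k * (ε ^ (B - 1) - ‖w‖ ^ (B - 1))) • w‖ := by
        congr 1; module
    _ ≤ (V + k * ‖w‖ ^ B) + k * (ε ^ (B - 1) - ‖w‖ ^ (B - 1)) * ‖w‖ := by
        refine (norm_sub_le _ _).trans (add_le_add h ?_)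
        rw [norm_smul, Real.norm_of_nonneg (mul_nonneg hk hgap)]
    _ = (V + k * ‖w‖ ^ B) + (k * ε ^ (B - 1) * ‖w‖ - k * ‖w‖ ^ B) := by
        rw [← rpow_sub_one_mul (norm_nonneg w)]; ring
    _ ≤ (V + k * ‖w‖ ^ B) + (k * ε ^ (B - 1) * ε - k * ‖w‖ ^ B) := by gcongr
    _ = V + k * ε ^ B := by rw [mul_assoc k, rpow_sub_one_mul hε]; ring

end NormedSpace

/-- Exactness (convex hull) assertion of Proposition 3.10 in the case of zero nominal
wind forecast: the convex hull of the graph of the relaxed spread set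
`S^∠(w, x) = B_{τ(‖w‖)}(σ(‖w‖)·w + x)` over the wind ball `B_ε(0)` equals the graph of
the ball spread set `S^∘(w, x) = B_{τ(ε)}(σ(ε)·w + x)`, where `σ(ν) = (C·V/2)·ν^(B-1)`
and `τ(ν) = V + (C·V/2)·ν^B`. -/
theorem convexHull_relaxed_eq_ball_of_zero_forecast (B C V ε : ℝ)
    (hB : 1 ≤ B) (hC : 0 ≤ C) (hV : 0 ≤ V) (hε : 0 ≤ ε)
    (x : EuclideanSpace ℝ (Fin 2)) :
    convexHull ℝ
        {p : EuclideanSpace ℝ (Fin 2) × EuclideanSpace ℝ (Fin 2) |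
          ‖p.1‖ ≤ ε ∧
          ‖p.2 - (C * V / 2 * ‖p.1‖ ^ (B - 1)) • p.1 - x‖ ≤
            V + C * V / 2 * ‖p.1‖ ^ B} =
      {p : EuclideanSpace ℝ (Fin 2) × EuclideanSpace ℝ (Fin 2) |
        ‖p.1‖ ≤ ε ∧
        ‖p.2 - (C * V / 2 * ε ^ (B - 1)) • p.1 - x‖ ≤
          V + C * V / 2 * ε ^ B} := by
  set k := C * V / 2
  have hk : 0 ≤ k := by positivity
  have outer_eq := convexHull_setOf_norm_eq_and_norm_sub_smul_le hε (k * ε ^ (B - 1))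
    (V + k * ε ^ B) x
  refine (convexHull_min ?relaxed_sub_outer (outer_eq ▸ convex_convexHull ℝ _)).antisymm
    (outer_eq ▸ convexHull_mono ?sphere_sub_relaxed)
  case relaxed_sub_outer =>
    exact fun p ⟨hp, h⟩ ↦ ⟨hp, norm_sub_rpow_smul_le_of_norm_le hB hk hp h⟩
  case sphere_sub_relaxed =>
    rintro p ⟨hp, h⟩
    exact ⟨hp.le, by rwa [hp]⟩
end

section
/- Let ε > 0, τ ≥ 0, σ ∈ ℝ, and let w, x ∈ ℝ² with ‖w‖ ≤ ε. Then there exist w_A, w_B ∈ ℝ² with ‖w_A‖ = ‖w_B‖ = ε and a real number λ ∈ [0, 1] such that λ·w_A + (1 − λ)·w_B = w and λ • B_τ(σ·w_A + x) + (1 − λ) • B_τ(σ·w_B + x) = B_τ(σ·w + x), where λ • S denotes the pointwise scaling {λ·s : s ∈ S} and the sum is the Minkowski sum of sets. -/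
/-!
Write `w = t • u` with `‖u‖ = ε` and `t ∈ [-1, 1]`; then `w` is the convex combination of the
antipodal pair `u`, `-u` with weight `λ = (1 + t) / 2`. The balls of equal radius are translates
of one convex set `B`, and for convex `B` one has `λ • B + (1 - λ) • B = B`, so the Minkowski
combination of the two balls is the ball around the combination of their centres.
-/

open Set
open scoped Pointwise

theorem Set.smul_vadd_set {α E : Type*} [Monoid α] [AddMonoid E] [DistribMulAction α E] (c : α)
    (x : E) (s : Set E) : c • (x +ᵥ s) = c • x +ᵥ c • s := by
  ext
  simp [mem_smul_set, mem_vadd_set]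

section Convex

variable {E : Type*} [AddCommGroup E] [Module ℝ E]

theorem Convex.smul_vadd_add_smul_vadd {s : Set E} (hs : Convex ℝ s) {a b : ℝ} (ha : 0 ≤ a)
    (hb : 0 ≤ b) (hab : a + b = 1) (x y : E) :
    a • (x +ᵥ s) + b • (y +ᵥ s) = (a • x + b • y) +ᵥ s := by
  rw [smul_vadd_set, smul_vadd_set, vadd_add_vadd, ← hs.add_smul ha hb, hab, one_smul]

end Convex

section Normed

variable {E : Type*} [NormedAddCommGroup E] [NormedSpace ℝ E]

theorem smul_closedBall_add_smul_closedBall {a b : ℝ} (ha : 0 ≤ a) (hb : 0 ≤ b) (hab : a + b = 1)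
    (x y : E) (r : ℝ) :
    a • Metric.closedBall x r + b • Metric.closedBall y r = Metric.closedBall (a • x + b • y) r := by
  simpa only [vadd_closedBall_zero] using
    (convex_closedBall 0 r).smul_vadd_add_smul_vadd ha hb hab x y

theorem exists_norm_eq_smul_of_norm_le [Nontrivial E] {w : E} {ε : ℝ} (hw : ‖w‖ ≤ ε) :
    ∃ u : E, ‖u‖ = ε ∧ ∃ t ∈ Icc (-1 : ℝ) 1, t • u = w := by
  rcases eq_or_ne w 0 with rfl | hw0
  · obtain ⟨u, hu⟩ := exists_norm_eq E ((norm_nonneg _).trans hw)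
    exact ⟨u, hu, 0, by norm_num, zero_smul ℝ u⟩
  have hε : 0 < ε := (norm_pos_iff.mpr hw0).trans_le hw
  have hwn : ‖w‖ ≠ 0 := norm_ne_zero_iff.mpr hw0
  refine ⟨(ε / ‖w‖) • w, ?_, ‖w‖ / ε, ⟨?_, ?_⟩, ?_⟩
  · rw [norm_smul, Real.norm_of_nonneg (by positivity), div_mul_cancel₀ _ hwn]
  · exact (neg_one_lt_zero.trans_le (by positivity)).le
  · exact (div_le_one hε).mpr hw
  · rw [smul_smul, div_mul_div_cancel₀ hε.ne', div_self hwn, one_smul]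

end Normed

theorem ball_convex_combination_step_general (ε τ : ℝ) (σ : ℝ)
    (w x : EuclideanSpace ℝ (Fin 2)) (hw : ‖w‖ ≤ ε) :
    ∃ (wA wB : EuclideanSpace ℝ (Fin 2)) (l : ℝ),
      ‖wA‖ = ε ∧ ‖wB‖ = ε ∧ 0 ≤ l ∧ l ≤ 1 ∧
      l • wA + (1 - l) • wB = w ∧
      l • Metric.closedBall (σ • wA + x) τ + (1 - l) • Metric.closedBall (σ • wB + x) τ =
        Metric.closedBall (σ • w + x) τ := by
  obtain ⟨u, hu, t, ⟨ht₁, ht₂⟩, rfl⟩ := exists_norm_eq_smul_of_norm_le hw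
  have hcomb : ((1 + t) / 2) • u + (1 - (1 + t) / 2) • -u = t • u := by module
  refine ⟨u, -u, (1 + t) / 2, hu, (norm_neg u).trans hu, by linarith, by linarith, hcomb, ?_⟩
  rw [smul_closedBall_add_smul_closedBall (by linarith) (by linarith) (by ring), ← hcomb]
  congr 1
  module

/-- The key convex-combination step in the exactness proof of Proposition 3.10: any wind
vector `w` in the ball of radius `ε` is a convex combination of two wind vectors of norm
`ε` whose scaled spread balls Minkowski-sum to the spread ball of `w`. -/
theorem ball_convex_combination_step (ε τ : ℝ) (hε : 0 < ε) (hτ : 0 ≤ τ) (σ : ℝ)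
    (w x : EuclideanSpace ℝ (Fin 2)) (hw : ‖w‖ ≤ ε) :
    ∃ (wA wB : EuclideanSpace ℝ (Fin 2)) (l : ℝ),
      ‖wA‖ = ε ∧ ‖wB‖ = ε ∧ 0 ≤ l ∧ l ≤ 1 ∧
      l • wA + (1 - l) • wB = w ∧
      l • Metric.closedBall (σ • wA + x) τ + (1 - l) • Metric.closedBall (σ • wB + x) τ =
        Metric.closedBall (σ • w + x) τ :=
  ball_convex_combination_step_general ε τ σ w x hw
end
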